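/- arXiv:2210.05959 — 3 statements merged into one kernel-verified Lean document; each statement's English description precedes it below -/
import Mathlib

section
/- Let ReLU(t) = max(t, 0), let Â be a real n×n matrix, E a real n×h matrix, C a real n×h' matrix, and let W be a real h×h' matrix such that every entry of Â E W is nonzero. Define r(W') = ∑_{i,j} C[i,j] · (ReLU•(Â E W'))[i,j]. Then there exists a neighborhood of W on which r agrees with an affine function of W'; in particular, r is twice differentiable at W and its second (Fréchet) derivative at W is zero. -/
open Matrix

attribute [local instance] Matrix.normedAddCommGroup Matrix.normedSpace

noncomputable def relu (t : ℝ) : ℝ := max t 0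

open Filter Topology

/-
Each preactivation entry of `Â E W` is nonzero, so by continuity it keeps its sign for all `W'`
near `W`; there ReLU acts on it either as the identity or as zero, and the readout coincides with
the linear map `W' ↦ ∑ C[i,j] (Â E W')[i,j]` summed over the entries that are positive at `W`.
A function that is locally affine has locally constant derivative, hence vanishing second
derivative.
-/

theorem relu_eventuallyEq_of_ne_zero {x₀ : ℝ} (hx₀ : x₀ ≠ 0) :
    relu =ᶠ[𝓝 x₀] fun x => if 0 < x₀ then x else 0 := by
  rcases hx₀.lt_or_gt with hneg | hpos
  · filter_upwards [eventually_lt_nhds hneg] with x hx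
    simp [relu, hx.le, hneg.not_gt]
  · filter_upwards [eventually_gt_nhds hpos] with x hx
    simp [relu, hpos, hx.le]

theorem fderiv_eventuallyEq_of_eventuallyEq_affine {𝕜 E F : Type*} [NontriviallyNormedField 𝕜]
    [NormedAddCommGroup E] [NormedSpace 𝕜 E] [NormedAddCommGroup F] [NormedSpace 𝕜 F]
    {f : E → F} {x : E} (L : E →L[𝕜] F) (c : F) (h : f =ᶠ[𝓝 x] fun y => L y + c) :
    fderiv 𝕜 f =ᶠ[𝓝 x] fun _ => L := by
  filter_upwards [h.eventuallyEq_nhds] with y hy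
  exact ((L.hasFDerivAt.add_const c).congr_of_eventuallyEq hy).fderiv

section ReluReadout

variable {l m n : Type*} [Fintype m]

/-- The readout `W' ↦ ∑ C[i,j] ReLU((B W')[i,j])` with each ReLU replaced by its derivative at
the preactivation `(B W)[i,j]`. -/
noncomputable def reluReadoutLinearization [Fintype l] [Fintype n] (C : Matrix l n ℝ)
    (B : Matrix l m ℝ) (W : Matrix m n ℝ) : Matrix m n ℝ →L[ℝ] ℝ :=
  LinearMap.toContinuousLinearMap <|
    ∑ i, ∑ j, (if 0 < (B * W) i j then C i j else 0) •
      (entryLinearMap ℝ ℝ i j ∘ₗ mulLeftLinearMap n ℝ B)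

theorem reluReadoutLinearization_apply [Fintype l] [Fintype n] (C : Matrix l n ℝ)
    (B : Matrix l m ℝ) (W W' : Matrix m n ℝ) :
    reluReadoutLinearization C B W W' =
      ∑ i, ∑ j, (if 0 < (B * W) i j then C i j else 0) * (B * W') i j := by
  simp only [reluReadoutLinearization, LinearMap.coe_toContinuousLinearMap', LinearMap.sum_apply,
    LinearMap.smul_apply, LinearMap.comp_apply, entryLinearMap_apply,
    mulLeftLinearMap_apply, smul_eq_mul]

theorem relu_mul_apply_eventuallyEq {B : Matrix l m ℝ} {W : Matrix m n ℝ} {i : l} {j : n}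
    (hW : (B * W) i j ≠ 0) :
    (fun W' => relu ((B * W') i j)) =ᶠ[𝓝 W]
      fun W' => if 0 < (B * W) i j then (B * W') i j else 0 := by
  have hcont : Continuous fun W' : Matrix m n ℝ => (B * W') i j :=
    (continuous_const.matrix_mul continuous_id).matrix_elem i j
  exact (relu_eventuallyEq_of_ne_zero hW).comp_tendsto (hcont.tendsto W)

theorem reluReadout_eventuallyEq_linearization [Fintype l] [Fintype n] (C : Matrix l n ℝ)
    {B : Matrix l m ℝ} {W : Matrix m n ℝ} (hW : ∀ i j, (B * W) i j ≠ 0) :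
    (fun W' => ∑ i, ∑ j, C i j * ((B * W').map relu) i j) =ᶠ[𝓝 W]
      reluReadoutLinearization C B W := by
  have hentries : ∀ᶠ W' in 𝓝 W, ∀ i j,
      relu ((B * W') i j) = if 0 < (B * W) i j then (B * W') i j else 0 :=
    eventually_all.2 fun i => eventually_all.2 fun j => relu_mul_apply_eventuallyEq (hW i j)
  filter_upwards [hentries] with W' hW'
  rw [reluReadoutLinearization_apply]
  refine Finset.sum_congr rfl fun i _ => Finset.sum_congr rfl fun j _ => ?_
  rw [map_apply, hW' i j]
  split_ifs <;> simp

end ReluReadout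

/-- **Case 1 of Theorem 1 of the paper.** If every entry of `Â E W` is
nonzero and `r(W') = ∑_{i,j} C[i,j] • (ReLU • (Â E W'))[i,j]`, then `r` agrees with an
affine function on a neighborhood of `W`; in particular `r` is twice differentiable at
`W` and its second Fréchet derivative at `W` vanishes. -/
theorem gcn_relu_layer_second_deriv_same_layer_eq_zero
    (n h h' : ℕ)
    (Ahat : Matrix (Fin n) (Fin n) ℝ) (E : Matrix (Fin n) (Fin h) ℝ)
    (C : Matrix (Fin n) (Fin h') ℝ) (W : Matrix (Fin h) (Fin h') ℝ)
    (hW : ∀ i j, (Ahat * E * W) i j ≠ 0)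
    (r : Matrix (Fin h) (Fin h') ℝ → ℝ)
    (hr : ∀ W', r W' = ∑ i, ∑ j, C i j * ((Ahat * E * W').map relu) i j) :
    (∃ (L : Matrix (Fin h) (Fin h') ℝ →L[ℝ] ℝ) (c : ℝ),
        ∀ᶠ W' in nhds W, r W' = L W' + c) ∧
      DifferentiableAt ℝ r W ∧
      DifferentiableAt ℝ (fderiv ℝ r) W ∧
      fderiv ℝ (fderiv ℝ r) W = 0 := by
  set L := reluReadoutLinearization C (Ahat * E) W
  have hrL : r =ᶠ[𝓝 W] fun W' => L W' + 0 := by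
    filter_upwards [reluReadout_eventuallyEq_linearization C hW] with W' hW'
    rw [hr, hW', add_zero]
  have hfd : fderiv ℝ r =ᶠ[𝓝 W] fun _ => L :=
    fderiv_eventuallyEq_of_eventuallyEq_affine L 0 hrL
  refine ⟨⟨L, 0, hrL⟩, ?_, (differentiableAt_const L).congr_of_eventuallyEq hfd, ?_⟩
  · exact ((L.hasFDerivAt.add_const 0).congr_of_eventuallyEq hrL).differentiableAt
  · rw [hfd.fderiv_eq, fderiv_fun_const]
    rfl
end

section
/- Let ReLU(t) = max(t, 0) and step(t) = 1 if t > 0 and 0 if t < 0. Let Â be a real n×n matrix, E a real n×h matrix, W a real h×h' matrix, and G a real n×h' matrix, and assume every entry of Â E W is nonzero. Define R(E', W') = ∑_{i,j} G[i,j] · (ReLU•(Â E' W'))[i,j] and S = step•(Â E W). Then the mixed second partial derivative ∂²R/∂E[a,b] ∂W[c,d] at (E, W) equals δ_{b,c} · [Â^T (G ⊙ S)][a,d], where δ is the Kronecker delta. -/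
/-!
Because `Â E W` has no zero entry, every entry of the preactivation `Â (E + s B) (W + t C)`
keeps its sign for `(s, t)` near `0`, so there ReLU acts as the Hadamard product with the fixed
mask `S = step•(Â E W)`. The loss is then locally the affine-bilinear polynomial
`⟨G ⊙ S, Â (E + s B) (W + t C)⟩` in `(s, t)`, whose mixed derivative is the coefficient
`⟨G ⊙ S, Â B C⟩`. For matrix units `B = E_ab`, `C = E_cd` one has `B C = δ_bc E_ad`.
-/

open Matrix Filter Topology

noncomputable def step (t : ℝ) : ℝ := if 0 < t then 1 else 0

lemma relu_eventuallyEq_step_mul {x : ℝ} (hx : x ≠ 0) : relu =ᶠ[𝓝 x] fun y => step x * y := by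
  rcases hx.lt_or_gt with hneg | hpos
  · filter_upwards [Iio_mem_nhds hneg] with y hy
    simp [relu, step, hneg.not_gt, max_eq_right (Set.mem_Iio.mp hy).le]
  · filter_upwards [Ioi_mem_nhds hpos] with y hy
    simp [relu, step, hpos, max_eq_left (Set.mem_Ioi.mp hy).le]

lemma eventually_map_relu_eq_hadamard {X m n : Type*} [TopologicalSpace X] [Finite m] [Finite n]
    {P : X → Matrix m n ℝ} {x₀ : X} (hP : ContinuousAt P x₀) (hne : ∀ i j, P x₀ i j ≠ 0) :
    ∀ᶠ x in 𝓝 x₀, (P x).map relu = (P x₀).map step ⊙ P x := by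
  have hentry : ∀ i j, ∀ᶠ x in 𝓝 x₀, relu (P x i j) = step (P x₀ i j) * P x i j := fun i j =>
    (tendsto_pi_nhds.1 (tendsto_pi_nhds.1 hP i) j).eventually (relu_eventuallyEq_step_mul (hne i j))
  filter_upwards [eventually_all.2 fun i => eventually_all.2 (hentry i)] with x hx
  ext i j
  exact hx i j

lemma deriv_deriv_eq_of_eventuallyEq_bilinear {f : ℝ → ℝ → ℝ} {α β γ δ : ℝ}
    (hf : ∀ᶠ p : ℝ × ℝ in 𝓝 0, f p.1 p.2 = α + p.1 * β + p.2 * γ + p.1 * p.2 * δ) :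
    deriv (fun s => deriv (f s) 0) 0 = δ := by
  have hinner : (fun s => deriv (f s) 0) =ᶠ[𝓝 0] fun s => γ + s * δ := by
    rw [← Prod.mk_zero_zero, nhds_prod_eq] at hf
    filter_upwards [hf.curry] with s hs
    have hpoly := ((hasDerivAt_id (0 : ℝ)).mul_const γ).add
      (((hasDerivAt_id (0 : ℝ)).const_mul s).mul_const δ) |>.const_add (α + s * β)
    rw [EventuallyEq.deriv_eq (f₁ := f s) hs]
    simpa [add_assoc] using hpoly.deriv
  rw [hinner.deriv_eq]
  simp

lemma mul_add_smul_mul_add_smul {l m n p R : Type*} [Fintype m] [Fintype n] [CommSemiring R]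
    (A : Matrix l m R) (E B : Matrix m n R) (W C : Matrix n p R) (s t : R) :
    A * (E + s • B) * (W + t • C)
      = A * E * W + s • (A * B * W) + t • (A * E * C) + (s * t) • (A * B * C) := by
  simp only [Matrix.mul_add, Matrix.add_mul, Matrix.mul_smul, Matrix.smul_mul]
  module

lemma trace_mul_transpose_mul_single_mul_single {l m n o R : Type*} [Fintype l] [Fintype m]
    [Fintype n] [Fintype o] [DecidableEq m] [DecidableEq n] [DecidableEq o] [CommSemiring R]
    (K : Matrix l o R) (A : Matrix l m R) (a : m) (b c : n) (d : o) :
    trace (K * (A * single a b (1 : R) * single c d (1 : R))ᵀ)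
      = (if b = c then 1 else 0) * (Aᵀ * K) a d := by
  rw [Matrix.mul_assoc]
  split_ifs with hbc
  · subst hbc
    rw [single_mul_single_same, one_mul, transpose_mul, transpose_single, trace_mul_comm,
      Matrix.mul_assoc, trace_single_mul, one_smul, one_mul]
  · simp [hbc]

/-- **inner formula of Case 4 of Theorem 1 of the paper.** For the
linear readout `R(E', W') = ∑_{i,j} G[i,j] • (ReLU•(Â E' W'))[i,j]` of a ReLU GCN
layer whose preactivation `Â E W` has no zero entry, the mixed second partial
derivative `∂²R / ∂E[a,b] ∂W[c,d]` at `(E, W)` equals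
`δ_{b,c} • [Âᵀ (G ⊙ S)][a,d]` with `S = step•(Â E W)`. -/
theorem gcn_mixed_hessian_embedding_weight
    (n h h' : ℕ)
    (Ahat : Matrix (Fin n) (Fin n) ℝ) (E : Matrix (Fin n) (Fin h) ℝ)
    (W : Matrix (Fin h) (Fin h') ℝ) (G : Matrix (Fin n) (Fin h') ℝ)
    (hne : ∀ i j, (Ahat * E * W) i j ≠ 0)
    (a : Fin n) (b : Fin h) (c : Fin h) (d : Fin h') :
    deriv (fun s : ℝ =>
        deriv (fun t : ℝ =>
            ∑ i, ∑ j, G i j *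
              ((Ahat * (E + s • Matrix.single a b (1 : ℝ)) *
                  (W + t • Matrix.single c d (1 : ℝ))).map relu) i j) 0) 0
      = (if b = c then 1 else 0) *
          (Ahatᵀ * Matrix.hadamard G ((Ahat * E * W).map step)) a d := by
  set B := single a b (1 : ℝ)
  set C := single c d (1 : ℝ)
  set K := G ⊙ (Ahat * E * W).map step
  let P : ℝ × ℝ → Matrix (Fin n) (Fin h') ℝ := fun p => Ahat * (E + p.1 • B) * (W + p.2 • C)
  have hP₀ : P 0 = Ahat * E * W := by simp [P]
  have hP : Continuous P := by fun_prop
  rw [← trace_mul_transpose_mul_single_mul_single]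
  refine deriv_deriv_eq_of_eventuallyEq_bilinear (α := trace (K * (Ahat * E * W)ᵀ))
    (β := trace (K * (Ahat * B * W)ᵀ)) (γ := trace (K * (Ahat * E * C)ᵀ)) ?_
  filter_upwards [eventually_map_relu_eq_hadamard hP.continuousAt (hP₀ ▸ hne)] with p hp
  show ∑ i, ∑ j, (G ⊙ (P p).map relu) i j = _
  rw [hp, hP₀, ← hadamard_assoc, sum_hadamard_eq]
  simp only [P]
  rw [mul_add_smul_mul_add_smul]
  simp only [transpose_add, transpose_smul, Matrix.mul_add, Matrix.mul_smul, trace_add, trace_smul,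
    smul_eq_mul]
  rfl
end

section
/- Let F, r : ℝ^p → ℝ and suppose: (i) the gradient map ∇F : ℝ^p → ℝ^p is differentiable at a point θ₀ with (symmetric) derivative matrix H = ∇²F(θ₀); (ii) the gradient map ∇r : ℝ^p → ℝ^p is continuous at θ₀; (iii) θ : ℝ → ℝ^p is differentiable at 0 with θ(0) = θ₀, and there is a neighborhood of 0 on which the stationarity condition ∇F(θ(ε)) + ε ∇r(θ(ε)) = 0 holds for all ε. If H is invertible, then θ'(0) = −H^{-1} ∇r(θ₀). -/
open scoped RealInnerProductSpace

open Filter Topology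

section PerturbedStationaryPath

variable {𝕜 E F : Type*} [NontriviallyNormedField 𝕜]
  [NormedAddCommGroup E] [NormedSpace 𝕜 E] [NormedAddCommGroup F] [NormedSpace 𝕜 F]

/-- `t • g t - t • g 0 = t • (g t - g 0)` is `o(t)` because `g` is continuous at `0`. -/
theorem hasDerivAt_smul_self_of_continuousAt {g : 𝕜 → F} (hg : ContinuousAt g 0) :
    HasDerivAt (fun t => t • g t) (g 0) 0 := by
  rw [hasDerivAt_iff_isLittleO_nhds_zero]
  have hsmall : (fun t : 𝕜 => g t - g 0) =o[𝓝 0] fun _ => (1 : 𝕜) :=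
    (Asymptotics.isLittleO_one_iff 𝕜).mpr (tendsto_sub_nhds_zero_iff.mpr hg)
  simpa [smul_sub] using (Asymptotics.isBigO_refl (fun t : 𝕜 => t) (𝓝 0)).smul_isLittleO hsmall

/-- Differentiating `G (θ ε) + ε • R (θ ε) = 0` at `ε = 0` gives `H (θ' 0) + R x₀ = 0`. -/
theorem deriv_eq_neg_symm_of_eventually_add_smul_eq_zero
    {G R : E → F} {H : E ≃L[𝕜] F} {x₀ : E} {θ : 𝕜 → E}
    (hG : HasFDerivAt G (H : E →L[𝕜] F) x₀) (hR : ContinuousAt R x₀)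
    (hθ : DifferentiableAt 𝕜 θ 0) (hθ₀ : θ 0 = x₀)
    (hstat : ∀ᶠ ε in 𝓝 (0 : 𝕜), G (θ ε) + ε • R (θ ε) = 0) :
    deriv θ 0 = -H.symm (R x₀) := by
  subst hθ₀
  have hpath : HasDerivAt (fun ε => G (θ ε) + ε • R (θ ε)) (H (deriv θ 0) + R (θ 0)) 0 :=
    (hG.comp_hasDerivAt 0 hθ.hasDerivAt).add
      (hasDerivAt_smul_self_of_continuousAt (hR.comp hθ.continuousAt))
  have hzero : HasDerivAt (fun ε => G (θ ε) + ε • R (θ ε)) 0 0 :=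
    (hasDerivAt_const (0 : 𝕜) (0 : F)).congr_of_eventuallyEq hstat
  have hlin : H (deriv θ 0) = -R (θ 0) := eq_neg_of_add_eq_zero_left (hpath.unique hzero)
  rw [← map_neg, ← hlin, H.symm_apply_apply]

end PerturbedStationaryPath

theorem influence_function_identity_general
    (p : ℕ) (F r : EuclideanSpace ℝ (Fin p) → ℝ)
    (θ₀ : EuclideanSpace ℝ (Fin p))
    (H : EuclideanSpace ℝ (Fin p) ≃L[ℝ] EuclideanSpace ℝ (Fin p))
    (hF : HasFDerivAt (gradient F)
      (H : EuclideanSpace ℝ (Fin p) →L[ℝ] EuclideanSpace ℝ (Fin p)) θ₀)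
    (hr : ContinuousAt (gradient r) θ₀)
    (θ : ℝ → EuclideanSpace ℝ (Fin p))
    (hθ : DifferentiableAt ℝ θ 0) (hθ₀ : θ 0 = θ₀)
    (hstat : ∀ᶠ ε in nhds (0 : ℝ),
      gradient F (θ ε) + ε • gradient r (θ ε) = 0) :
    deriv θ 0 = -(H.symm (gradient r θ₀)) :=
  deriv_eq_neg_symm_of_eventually_add_smul_eq_zero hF hr hθ hθ₀ hstat

/-- **classical influence-function identity, Eq. 5 of the paper.**
Suppose the gradient map `∇F` is differentiable at `θ₀` with invertible (and
symmetric) derivative `H = ∇²F(θ₀)`, `∇r` is continuous at `θ₀`, `θ` is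
differentiable at `0` with `θ 0 = θ₀`, and the stationarity condition
`∇F(θ(ε)) + ε • ∇r(θ(ε)) = 0` holds for all `ε` in a neighborhood of `0`.
Then `θ'(0) = −H⁻¹ (∇r(θ₀))`.  Invertibility of `H` is encoded by presenting it
as a continuous linear equivalence. -/
theorem influence_function_identity
    (p : ℕ) (F r : EuclideanSpace ℝ (Fin p) → ℝ)
    (θ₀ : EuclideanSpace ℝ (Fin p))
    (H : EuclideanSpace ℝ (Fin p) ≃L[ℝ] EuclideanSpace ℝ (Fin p))
    (hF : HasFDerivAt (gradient F)
      (H : EuclideanSpace ℝ (Fin p) →L[ℝ] EuclideanSpace ℝ (Fin p)) θ₀)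
    (hsymm : ∀ x y : EuclideanSpace ℝ (Fin p), ⟪H x, y⟫ = ⟪x, H y⟫)
    (hr : ContinuousAt (gradient r) θ₀)
    (θ : ℝ → EuclideanSpace ℝ (Fin p))
    (hθ : DifferentiableAt ℝ θ 0) (hθ₀ : θ 0 = θ₀)
    (hstat : ∀ᶠ ε in nhds (0 : ℝ),
      gradient F (θ ε) + ε • gradient r (θ ε) = 0) :
    deriv θ 0 = -(H.symm (gradient r θ₀)) :=
  influence_function_identity_general p F r θ₀ H hF hr θ hθ hθ₀ hstat
end
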